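/- arXiv:1008.3710 — 3 statements merged into one kernel-verified Lean document; each statement's English description precedes it below -/
import Mathlib

section
/- Let v_1, ..., v_N be non-zero vectors in (Z/2Z)^{2g} such that the standard symplectic pairing satisfies (v_i, v_j) = 1 for all i ≠ j. Then N ≤ 2g + 1. -/
/-- The standard symplectic pairing on `(ℤ/2ℤ)^{2g}`: coordinates `2k` and `2k+1`
are paired for each `k < g`. -/
def sympPair (g : ℕ) (x y : Fin (2 * g) → ZMod 2) : ZMod 2 :=
  ∑ i : Fin g,
    (x ⟨2 * i.val, by have := i.isLt; omega⟩ * y ⟨2 * i.val + 1, by have := i.isLt; omega⟩ +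
     x ⟨2 * i.val + 1, by have := i.isLt; omega⟩ * y ⟨2 * i.val, by have := i.isLt; omega⟩)

lemma sympPair_self (g : ℕ) (x : Fin (2 * g) → ZMod 2) : sympPair g x x = 0 := by
  unfold sympPair
  apply Finset.sum_eq_zero
  intro i _
  rw [mul_comm]
  exact CharTwo.add_self_eq_zero _

lemma sympPair_sum_left (g : ℕ) {ι : Type*} (S : Finset ι) (f : ι → Fin (2 * g) → ZMod 2)
    (y : Fin (2 * g) → ZMod 2) :
    sympPair g (∑ i ∈ S, f i) y = ∑ i ∈ S, sympPair g (f i) y := by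
  unfold sympPair
  simp only [Finset.sum_apply, Finset.sum_mul, ← Finset.sum_add_distrib]
  exact Finset.sum_comm

theorem stmt0 (g N : ℕ) (v : Fin N → Fin (2 * g) → ZMod 2)
    (hnz : ∀ i, v i ≠ 0)
    (hpair : ∀ i j, i ≠ j → sympPair g (v i) (v j) = 1) :
    N ≤ 2 * g + 1 := by
  by_contra h
  push_neg at h
  have hN : 2 * g + 2 ≤ N := h
  set u : Fin (2 * g + 1) → (Fin (2 * g) → ZMod 2) :=
    fun k => v ⟨k.val, by omega⟩ with hu
  have h01 : ∀ a : ZMod 2, a = 0 ∨ a = 1 := by decide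
  have hli : LinearIndependent (ZMod 2) u := by
    rw [Fintype.linearIndependent_iff]
    intro c hc
    by_contra hcc
    push_neg at hcc
    obtain ⟨i0, hi0⟩ := hcc
    set S : Finset (Fin (2 * g + 1)) := Finset.univ.filter (fun i => c i = 1) with hS
    have hi0S : i0 ∈ S := by
      simp only [hS, Finset.mem_filter, Finset.mem_univ, true_and]
      rcases h01 (c i0) with h' | h'
      · exact absurd h' hi0
      · exact h'
    have hsum : ∑ i ∈ S, u i = 0 := by
      rw [← hc]
      rw [eq_comm]
      rw [← Finset.sum_filter_add_sum_filter_not Finset.univ (fun i => c i = 1)]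
      have h2 : ∑ i ∈ Finset.univ.filter (fun i => ¬ c i = 1), c i • u i = 0 := by
        apply Finset.sum_eq_zero
        intro i hi
        simp only [Finset.mem_filter] at hi
        rcases h01 (c i) with h' | h'
        · rw [h', zero_smul]
        · exact absurd h' hi.2
      rw [h2, add_zero]
      apply Finset.sum_congr rfl
      intro i hi
      simp only [hS, Finset.mem_filter] at hi
      rw [hi.2, one_smul]
    -- pair with an outside vector
    have hcard0 : ((S.card : ℕ) : ZMod 2) = 0 := by
      have := congrArg (fun w => sympPair g w (v ⟨2 * g + 1, by omega⟩)) hsum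
      simp only [sympPair_sum_left] at this
      have hz : sympPair g (0 : Fin (2 * g) → ZMod 2) (v ⟨2 * g + 1, by omega⟩) = 0 := by
        unfold sympPair
        simp
      rw [hz] at this
      rw [← this]
      rw [Finset.sum_congr rfl (fun i _ => hpair ⟨i.val, by omega⟩ ⟨2 * g + 1, by omega⟩
        (by intro he; have := congrArg Fin.val he; simp at this; omega))]
      simp
    -- pair with a vector inside S
    have hcard1 : (((S.card - 1 : ℕ)) : ZMod 2) = 0 := by
      have := congrArg (fun w => sympPair g w (u i0)) hsum
      simp only [sympPair_sum_left] at this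
      have hz : sympPair g (0 : Fin (2 * g) → ZMod 2) (u i0) = 0 := by
        unfold sympPair; simp
      rw [hz] at this
      rw [← Finset.add_sum_erase S _ hi0S] at this
      rw [sympPair_self] at this
      rw [zero_add] at this
      rw [Finset.sum_congr rfl (fun i hi => hpair ⟨i.val, by omega⟩ ⟨i0.val, by omega⟩
        (by
          intro he
          have hiv := congrArg Fin.val he
          simp only [] at hiv
          have : i = i0 := Fin.ext hiv
          rw [this] at hi
          exact (Finset.notMem_erase i0 S) hi))] at this
      simp only [Finset.sum_const, nsmul_eq_mul, mul_one] at this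
      rw [Finset.card_erase_of_mem hi0S] at this
      rw [← this]
    have hpos : 1 ≤ S.card := Finset.card_pos.mpr ⟨i0, hi0S⟩
    rw [ZMod.natCast_eq_zero_iff] at hcard0 hcard1
    omega
  have hle := hli.fintype_card_le_finrank
  simp [Module.finrank_fintype_fun_eq_card] at hle
end

section
/- For every g ≥ 1 there exist 2g+1 nonzero vectors v_1, ..., v_{2g+1} in (Z/2Z)^{2g} such that (v_i, v_j) = 1 for all i ≠ j; hence the bound 2g+1 in the previous statement is sharp. -/
/-! The vector `v_i` has block `(1,0)` in every hyperbolic plane `k < i / 2`, block `(1,1)`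
(for `i` even) or `(0,1)` (for `i` odd) in the plane `i / 2`, and zero elsewhere; this unrolls
the paper's inductive construction. For `i < j` the two vectors then pair nontrivially only in
the plane `i / 2`, where the pairing is `1`. -/

section Blocks

variable {g : ℕ}

def ofBlocks (g : ℕ) (f : ℕ → ZMod 2 × ZMod 2) : Fin (2 * g) → ZMod 2 :=
  fun j => if j.val % 2 = 0 then (f (j.val / 2)).1 else (f (j.val / 2)).2

lemma ofBlocks_even (f : ℕ → ZMod 2 × ZMod 2) (k : ℕ) (hk : 2 * k < 2 * g) :
    ofBlocks g f ⟨2 * k, hk⟩ = (f k).1 := by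
  simp [ofBlocks]

lemma ofBlocks_odd (f : ℕ → ZMod 2 × ZMod 2) (k : ℕ) (hk : 2 * k + 1 < 2 * g) :
    ofBlocks g f ⟨2 * k + 1, hk⟩ = (f k).2 := by
  simp [ofBlocks, Nat.add_mod, Nat.add_div]

lemma sympPair_ofBlocks (f f' : ℕ → ZMod 2 × ZMod 2) :
    sympPair g (ofBlocks g f) (ofBlocks g f') =
      ∑ k : Fin g, ((f k).1 * (f' k).2 + (f k).2 * (f' k).1) := by
  simp only [sympPair, ofBlocks_even, ofBlocks_odd]

end Blocks

lemma sympPair_comm (g : ℕ) (x y : Fin (2 * g) → ZMod 2) :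
    sympPair g x y = sympPair g y x := by
  unfold sympPair
  exact Finset.sum_congr rfl fun _ _ => by ring

lemma ne_zero_of_sympPair_eq_one {g : ℕ} {x y : Fin (2 * g) → ZMod 2}
    (h : sympPair g x y = 1) : x ≠ 0 := by
  rintro rfl
  simp [sympPair] at h

def chainBlock (i k : ℕ) : ZMod 2 × ZMod 2 :=
  if k < i / 2 then (1, 0)
  else if k = i / 2 then (if i % 2 = 0 then (1, 1) else (0, 1))
  else 0

lemma chainBlock_pair {i j : ℕ} (hij : i < j) (k : ℕ) :
    (chainBlock i k).1 * (chainBlock j k).2 + (chainBlock i k).2 * (chainBlock j k).1 =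
      if k = i / 2 then 1 else 0 := by
  unfold chainBlock
  split_ifs <;> first | omega | decide

lemma sympPair_chainBlock {g i j : ℕ} (hij : i < j) (hj : j ≤ 2 * g) :
    sympPair g (ofBlocks g (chainBlock i)) (ofBlocks g (chainBlock j)) = 1 := by
  have hi : i / 2 < g := by omega
  simp only [sympPair_ofBlocks, chainBlock_pair hij]
  rw [Finset.sum_eq_single_of_mem ⟨i / 2, hi⟩ (Finset.mem_univ _)]
  · simp
  · intro k _ hk
    simp [Fin.ext_iff.not.mp hk]

theorem stmt2 (g : ℕ) (hg : 1 ≤ g) :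
    ∃ v : Fin (2 * g + 1) → Fin (2 * g) → ZMod 2,
      (∀ i, v i ≠ 0) ∧ ∀ i j, i ≠ j → sympPair g (v i) (v j) = 1 := by
  have pair : ∀ i j : Fin (2 * g + 1), i ≠ j →
      sympPair g (ofBlocks g (chainBlock i)) (ofBlocks g (chainBlock j)) = 1 := by
    intro i j hij
    rcases Fin.lt_or_lt_of_ne hij with h | h
    · exact sympPair_chainBlock h (by omega)
    · rw [sympPair_comm]
      exact sympPair_chainBlock h (by omega)
  refine ⟨fun i => ofBlocks g (chainBlock i), fun i => ?_, pair⟩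
  have : Nontrivial (Fin (2 * g + 1)) := Fin.nontrivial_iff_two_le.mpr (by omega)
  obtain ⟨j, hj⟩ := exists_ne i
  exact ne_zero_of_sympPair_eq_one (pair i j hj.symm)
end

section
/- Define a sequence of families of vectors: in (Z/2Z)^2 let v^1_1 = (1,1), v^1_2 = (0,1), v^1_3 = (1,0); for g ≥ 2 in (Z/2Z)^{2g}, set v^g_i = (v^{g-1}_i; 0, 0) for 1 ≤ i ≤ 2g−2, v^g_{2g−1} = (v^{g-1}_{2g−1}; 1, 0), v^g_{2g} = (v^{g-1}_{2g−1}; 0, 1), v^g_{2g+1} = (v^{g-1}_{2g−1}; 1, 1). Then for all g ≥ 1 and all i ≠ j, the standard symplectic pairing satisfies (v^g_i, v^g_j) = 1. -/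
/-- The explicit family from the paper: `fam h` is the family `v^{h+1}_1, …, v^{h+1}_{2(h+1)+1}`
of `2(h+1)+1` vectors in `(ℤ/2ℤ)^{2(h+1)}` (so `h = g - 1`, genus `g = h+1`).
Base case (g = 1): `(1,1), (0,1), (1,0)`.  Inductive step (g = h+2): the first `2(h+1)`
vectors of genus `h+1` get `(0,0)` appended, and the last vector spawns three new vectors
obtained by appending `(1,0)`, `(0,1)` and `(1,1)`. -/
def fam : (h : ℕ) → Fin (2 * h + 3) → Fin (2 * h + 2) → ZMod 2
  | 0 => ![![1, 1], ![0, 1], ![1, 0]]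
  | (h + 1) => fun i j =>
    if hj : j.val < 2 * h + 2 then
      if hi : i.val < 2 * h + 2 then
        fam h ⟨i.val, by omega⟩ ⟨j.val, hj⟩
      else
        fam h ⟨2 * h + 2, by omega⟩ ⟨j.val, hj⟩
    else
      if j.val = 2 * h + 2 then
        (if i.val = 2 * h + 2 ∨ i.val = 2 * h + 4 then 1 else 0)
      else
        (if i.val = 2 * h + 3 ∨ i.val = 2 * h + 4 then 1 else 0)


lemma sympPair_succ (g : ℕ) (x y : Fin (2 * (g + 1)) → ZMod 2) :
    sympPair (g + 1) x y =
      sympPair g (x ∘ Fin.castLE (by omega)) (y ∘ Fin.castLE (by omega)) +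
        (x ⟨2 * g, by omega⟩ * y ⟨2 * g + 1, by omega⟩ +
          x ⟨2 * g + 1, by omega⟩ * y ⟨2 * g, by omega⟩) := by
  rw [sympPair, Fin.sum_univ_castSucc]
  rfl

/-- The paper's `p`, shifted to indices starting at `0`. -/
def famParent (h : ℕ) (i : Fin (2 * (h + 1) + 3)) : Fin (2 * h + 3) :=
  ⟨min i.val (2 * h + 2), by omega⟩

lemma fam_succ_comp_castLE (h : ℕ) (i : Fin (2 * (h + 1) + 3)) :
    fam (h + 1) i ∘ Fin.castLE (by omega) = fam h (famParent h i) := by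
  funext k
  simp only [Function.comp_apply, fam, Fin.val_castLE, k.isLt, dif_pos]
  split_ifs <;> congr 1 <;> ext <;> simp only [famParent] <;> omega

lemma fam_succ_apply_two_mul (h : ℕ) (i : Fin (2 * (h + 1) + 3)) :
    fam (h + 1) i ⟨2 * (h + 1), by omega⟩ =
      if i.val = 2 * h + 2 ∨ i.val = 2 * h + 4 then 1 else 0 := by
  simp [fam, mul_add]

lemma fam_succ_apply_two_mul_add_one (h : ℕ) (i : Fin (2 * (h + 1) + 3)) :
    fam (h + 1) i ⟨2 * (h + 1) + 1, by omega⟩ =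
      if i.val = 2 * h + 3 ∨ i.val = 2 * h + 4 then 1 else 0 := by
  simp [fam, mul_add]

lemma fam_succ_last_of_lt (h : ℕ) (i : Fin (2 * (h + 1) + 3)) (hi : i.val < 2 * h + 2) :
    fam (h + 1) i ⟨2 * (h + 1), by omega⟩ = 0 ∧ fam (h + 1) i ⟨2 * (h + 1) + 1, by omega⟩ = 0 := by
  rw [fam_succ_apply_two_mul, fam_succ_apply_two_mul_add_one]
  constructor <;> exact if_neg (by omega)

lemma fam_succ_lastPair_of_parent_ne (h : ℕ) (i j : Fin (2 * (h + 1) + 3))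
    (hp : famParent h i ≠ famParent h j) :
    fam (h + 1) i ⟨2 * (h + 1), by omega⟩ * fam (h + 1) j ⟨2 * (h + 1) + 1, by omega⟩ +
      fam (h + 1) i ⟨2 * (h + 1) + 1, by omega⟩ * fam (h + 1) j ⟨2 * (h + 1), by omega⟩ = 0 := by
  have : i.val < 2 * h + 2 ∨ j.val < 2 * h + 2 := by
    by_contra! hij
    exact hp (Fin.ext (by simp only [famParent]; omega))
  rcases this with hi | hj
  · simp [fam_succ_last_of_lt h i hi]
  · simp [fam_succ_last_of_lt h j hj]

lemma fam_succ_lastPair_of_parent_eq (h : ℕ) (i j : Fin (2 * (h + 1) + 3)) (hij : i ≠ j)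
    (hp : famParent h i = famParent h j) :
    fam (h + 1) i ⟨2 * (h + 1), by omega⟩ * fam (h + 1) j ⟨2 * (h + 1) + 1, by omega⟩ +
      fam (h + 1) i ⟨2 * (h + 1) + 1, by omega⟩ * fam (h + 1) j ⟨2 * (h + 1), by omega⟩ = 1 := by
  have hp : min i.val (2 * h + 2) = min j.val (2 * h + 2) := congrArg Fin.val hp
  have hij : i.val ≠ j.val := Fin.val_ne_of_ne hij
  have hi : i.val = 2 * h + 2 ∨ i.val = 2 * h + 3 ∨ i.val = 2 * h + 4 := by omega
  have hj : j.val = 2 * h + 2 ∨ j.val = 2 * h + 3 ∨ j.val = 2 * h + 4 := by omega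
  simp only [fam_succ_apply_two_mul, fam_succ_apply_two_mul_add_one]
  rcases hi with hi | hi | hi <;> rcases hj with hj | hj | hj <;> simp [hi, hj] at hij ⊢

theorem stmt10 (h : ℕ) (i j : Fin (2 * h + 3)) (hij : i ≠ j) :
    sympPair (h + 1) (fam h i) (fam h j) = 1 := by
  induction h with
  | zero => revert i j; decide
  | succ h ih =>
    rw [sympPair_succ, fam_succ_comp_castLE, fam_succ_comp_castLE]
    by_cases hp : famParent h i = famParent h j
    · rw [fam_succ_lastPair_of_parent_eq h i j hij hp, hp, sympPair_self, zero_add]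
    · rw [ih _ _ hp, fam_succ_lastPair_of_parent_ne h i j hp, add_zero]
end
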